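/- Let μ_t(x₀) and Σ_t(x₀) solve μ'_t = F_t μ_t and Σ'_t = 2 F_t Σ_t + G_t G_tᵀ, where F_t = f_t · I is a scalar multiple of the identity. Define the conditional flow-matching field u_t(x | x₀) = Σ'_t Σ_t⁻¹ (x − μ_t) + μ'_t (with Σ_t invertible). Then u_t(x | x₀) = F_t (2x − μ_t(x₀)) − G_t G_tᵀ ∇_x log p(x | x₀), where p(x | x₀) = N(x; μ_t(x₀), Σ_t(x₀)). That is, the conditional flow-matching vector field is a linear combination of the drift term and the preconditioned (whitened) conditional score. -/

import Mathlib

open Matrix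

/-! Because the drift `F_t = f_t I` is scalar, `Σ'_t Σ_t⁻¹ = 2 f_t I + G_t G_tᵀ Σ_t⁻¹`; the
`G_t G_tᵀ` part acts on `Σ_t⁻¹ (x − μ_t)`, which is minus the conditional score, and the
remaining terms `2 f_t (x − μ_t) + f_t μ_t` collect to `f_t (2x − μ_t)`. -/

theorem Matrix.smul_add_mulVec_inv_mulVec {n R : Type*} [Fintype n] [DecidableEq n] [CommRing R]
    {S : Matrix n n R} (hS : IsUnit S.det) (c : R) (A : Matrix n n R) (v : n → R) :
    (c • S + A) *ᵥ (S⁻¹ *ᵥ v) = c • v + A *ᵥ (S⁻¹ *ᵥ v) := by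
  rw [add_mulVec, smul_mulVec, mulVec_mulVec, mul_nonsing_inv _ hS, one_mulVec]

theorem flow_matching_field_eq_drift_add_whitened_score_general {m : ℕ}
    (f : ℝ → ℝ) (G : ℝ → Matrix (Fin m) (Fin m) ℝ)
    (μ : ℝ → (Fin m → ℝ)) (S : ℝ → Matrix (Fin m) (Fin m) ℝ)
    (t : ℝ) (μ' : Fin m → ℝ) (S' : Matrix (Fin m) (Fin m) ℝ)
    (hμODE : μ' = f t • μ t)
    (hSODE : S' = (2 * f t) • S t + G t * (G t)ᵀ)
    (hSinv : IsUnit (S t).det)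
    (x : Fin m → ℝ) :
    S' *ᵥ ((S t)⁻¹ *ᵥ (x - μ t)) + μ' =
      f t • ((2 : ℝ) • x - μ t) - (G t * (G t)ᵀ) *ᵥ ((S t)⁻¹ *ᵥ (μ t - x)) := by
  subst hμODE hSODE
  rw [smul_add_mulVec_inv_mulVec hSinv, ← neg_sub x, mulVec_neg, mulVec_neg, sub_neg_eq_add]
  module

/-- The conditional flow-matching vector field
`u_t(x ∣ x₀) = Σ'_t Σ_t⁻¹ (x − μ_t) + μ'_t` for Gaussian probability paths whose mean and
covariance solve `μ'_t = F_t μ_t`, `Σ'_t = 2 F_t Σ_t + G_t G_tᵀ` with `F_t = f_t I`, equals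
`F_t (2x − μ_t) − G_t G_tᵀ Σ_t⁻¹ (μ_t − x)`, i.e. a linear combination of the drift and the
whitened conditional score `G_t G_tᵀ ∇ₓ log N(x; μ_t, Σ_t)`. -/
theorem flow_matching_field_eq_drift_add_whitened_score {m : ℕ}
    (f : ℝ → ℝ) (G : ℝ → Matrix (Fin m) (Fin m) ℝ)
    (μ : ℝ → (Fin m → ℝ)) (S : ℝ → Matrix (Fin m) (Fin m) ℝ)
    (t : ℝ) (μ' : Fin m → ℝ) (S' : Matrix (Fin m) (Fin m) ℝ)
    (hμd : ∀ i, HasDerivAt (fun s => μ s i) (μ' i) t)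
    (hSd : ∀ i j, HasDerivAt (fun s => S s i j) (S' i j) t)
    (hμODE : μ' = f t • μ t)
    (hSODE : S' = (2 * f t) • S t + G t * (G t)ᵀ)
    (hSinv : IsUnit (S t).det)
    (x : Fin m → ℝ) :
    S' *ᵥ ((S t)⁻¹ *ᵥ (x - μ t)) + μ' =
      f t • ((2 : ℝ) • x - μ t) - (G t * (G t)ᵀ) *ᵥ ((S t)⁻¹ *ᵥ (μ t - x)) :=
  flow_matching_field_eq_drift_add_whitened_score_general f G μ S t μ' S' hμODE hSODE hSinv x
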